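/- For 0 < α < 2 and ω ≥ 0, there exists a constant C > 0 such that the Mittag-Leffler function satisfies E_α(ω t^α) ≤ C e^{ω^{1/α} t} for all t ≥ 0. -/

import Mathlib

/-- The Mittag-Leffler function `E_α(z) = Σ zⁿ/Γ(αn+1)`. -/
noncomputable def mittagLeffler (α z : ℝ) : ℝ := ∑' n : ℕ, z ^ n / Real.Gamma (α * n + 1)

/-!
Put `x = ω^{1/α} t`, so that the `n`-th term of the series is `x^s / Γ(s+1)` with `s = αn`.
Writing `s = m + θ` with `m = ⌊s⌋` and `0 ≤ θ < 1`, convexity of `log Γ` gives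
`Γ(s+1) ≥ m! (m+1)^θ / 2`, hence `x^s / Γ(s+1) ≤ 2 (x^m/m! + x^(m+1)/(m+1)!)`.
Each `m` equals `⌊αn⌋` for at most `⌊1/α⌋ + 1` values of `n`, and
`Σ_m (x^m/m! + x^(m+1)/(m+1)!) = 2eˣ - 1`, so `E_α(x^α) ≤ 4 (⌊1/α⌋ + 1) eˣ`.
-/

open Real Set
open scoped Nat

namespace Real

theorem Gamma_mul_rpow_le_Gamma_add {n : ℕ} (hn : 2 ≤ n) {θ : ℝ} (hθ : 0 ≤ θ) :
    Gamma n * ((n : ℝ) - 1) ^ θ ≤ Gamma (n + θ) := by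
  rcases hθ.eq_or_lt with rfl | hθ
  · simp
  have hn1 : (0 : ℝ) < n - 1 := by
    have : (2 : ℝ) ≤ n := by exact_mod_cast hn
    linarith
  have hlog := BohrMollerup.f_add_nat_ge convexOn_log_Gamma (fun {y} hy => by
    rw [Function.comp_apply, Gamma_add_one hy.ne', log_mul hy.ne' (Gamma_pos_of_pos hy).ne',
      add_comm, Function.comp_apply]) hn hθ
  rw [Function.comp_apply, Function.comp_apply, ← log_rpow hn1,
    ← log_mul (Gamma_pos_of_pos (by linarith)).ne' (rpow_pos_of_pos hn1 θ).ne'] at hlog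
  exact (log_le_log_iff (by positivity) (Gamma_pos_of_pos (by positivity))).1 hlog

theorem factorial_mul_rpow_le_two_mul_Gamma (m : ℕ) {θ : ℝ} (h0 : 0 ≤ θ) (h1 : θ ≤ 1) :
    m ! * ((m : ℝ) + 1) ^ θ ≤ 2 * Gamma (m + 1 + θ) := by
  have hm : (0 : ℝ) < m + 1 := by positivity
  have hΓ : 0 < Gamma (m + 1 + θ) := Gamma_pos_of_pos (by positivity)
  have key : (m + 1) * (m ! * ((m : ℝ) + 1) ^ θ) ≤ (m + 1 + θ) * Gamma (m + 1 + θ) := by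
    have h := Gamma_mul_rpow_le_Gamma_add (n := m + 1 + 1) (by omega) h0
    rw [Nat.cast_succ, Gamma_nat_eq_factorial, Nat.factorial_succ, add_sub_cancel_right,
      add_right_comm, Gamma_add_one (by positivity)] at h
    push_cast at h
    linarith
  refine le_of_mul_le_mul_left (key.trans ?_) hm
  nlinarith

theorem rpow_le_one_add {b θ : ℝ} (hb : 0 ≤ b) (h0 : 0 ≤ θ) (h1 : θ ≤ 1) : b ^ θ ≤ 1 + b := by
  rcases le_total b 1 with hb1 | hb1
  · linarith [rpow_le_one hb hb1 h0]
  · linarith [rpow_le_self_of_one_le hb1 h1]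

theorem rpow_div_Gamma_le {x s : ℝ} (hx : 0 ≤ x) (hs : 0 ≤ s) :
    x ^ s / Gamma (s + 1) ≤ 2 * (x ^ ⌊s⌋₊ / ⌊s⌋₊ ! + x ^ (⌊s⌋₊ + 1) / (⌊s⌋₊ + 1)!) := by
  set m := ⌊s⌋₊
  set θ := s - m
  have hθ0 : 0 ≤ θ := sub_nonneg.2 (Nat.floor_le hs)
  have hθ1 : θ ≤ 1 := by linarith [Nat.lt_floor_add_one s]
  have hm : (0 : ℝ) < m + 1 := by positivity
  have hΓ : m ! * ((m : ℝ) + 1) ^ θ ≤ 2 * Gamma (s + 1) := by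
    simpa [θ, add_right_comm] using factorial_mul_rpow_le_two_mul_Gamma m hθ0 hθ1
  have hpow : x ^ s = x ^ m * x ^ θ := by
    rw [← rpow_natCast, ← rpow_add_of_nonneg hx (Nat.cast_nonneg m) hθ0, add_sub_cancel]
  have hfrac : x ^ θ / ((m : ℝ) + 1) ^ θ ≤ 1 + x / (m + 1) := by
    rw [← div_rpow hx hm.le]
    exact rpow_le_one_add (by positivity) hθ0 hθ1
  calc x ^ s / Gamma (s + 1)
      ≤ x ^ m * x ^ θ / (m ! * ((m : ℝ) + 1) ^ θ / 2) := by
        rw [hpow]; gcongr; linarith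
    _ = 2 * (x ^ m / m !) * (x ^ θ / ((m : ℝ) + 1) ^ θ) := by
        field_simp
    _ ≤ 2 * (x ^ m / m !) * (1 + x / (m + 1)) := by gcongr
    _ = 2 * (x ^ m / m ! + x ^ (m + 1) / (m + 1)!) := by
        rw [pow_succ, Nat.factorial_succ]; push_cast; field_simp

end Real

section FiberBound

variable {ι κ : Type*} {f : ι → κ} {N : ℕ} {g : κ → ℝ}

theorem sum_comp_le_of_encard_fiber_le (hf : ∀ k, (f ⁻¹' {k}).encard ≤ N) (hg : 0 ≤ g)
    (hgs : Summable g) (u : Finset ι) : ∑ i ∈ u, g (f i) ≤ N * ∑' k, g k := by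
  classical
  have hcard : ∀ k, {i ∈ u | f i = k}.card ≤ N := fun k => by
    have hsub : (↑({i ∈ u | f i = k} : Finset ι) : Set ι) ⊆ f ⁻¹' {k} := fun i hi => by
      simp_all
    have h := (Set.encard_le_encard hsub).trans (hf k)
    rw [Set.encard_coe_eq_coe_finsetCard] at h
    exact_mod_cast h
  calc ∑ i ∈ u, g (f i) = ∑ k ∈ u.image f, {i ∈ u | f i = k}.card • g k := Finset.sum_comp g f
    _ ≤ ∑ k ∈ u.image f, N * g k := by
        gcongr with k
        rw [nsmul_eq_mul]
        exact mul_le_mul_of_nonneg_right (by exact_mod_cast hcard k) (hg k)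
    _ = N * ∑ k ∈ u.image f, g k := (Finset.mul_sum ..).symm
    _ ≤ N * ∑' k, g k := by gcongr; exact hgs.sum_le_tsum _ fun k _ => hg k

theorem summable_comp_of_encard_fiber_le (hf : ∀ k, (f ⁻¹' {k}).encard ≤ N) (hg : 0 ≤ g)
    (hgs : Summable g) : Summable (g ∘ f) :=
  summable_of_sum_le (fun i => hg (f i)) (fun u => sum_comp_le_of_encard_fiber_le hf hg hgs u)

theorem tsum_comp_le_of_encard_fiber_le (hf : ∀ k, (f ⁻¹' {k}).encard ≤ N) (hg : 0 ≤ g)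
    (hgs : Summable g) : ∑' i, g (f i) ≤ N * ∑' k, g k :=
  Real.tsum_le_of_sum_le (fun i => hg (f i)) (sum_comp_le_of_encard_fiber_le hf hg hgs)

end FiberBound

theorem encard_preimage_floor_mul_le {α : ℝ} (hα : 0 < α) (k : ℕ) :
    ((fun n : ℕ => ⌊α * n⌋₊) ⁻¹' {k}).encard ≤ (⌊α⁻¹⌋₊ + 1 : ℕ) := by
  set c := ⌈k / α⌉₊
  have hsub : (fun n : ℕ => ⌊α * n⌋₊) ⁻¹' {k} ⊆ (Finset.Ico c (c + (⌊α⁻¹⌋₊ + 1)) : Set ℕ) := by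
    intro n hn
    simp only [mem_preimage, mem_singleton_iff] at hn
    have hlo : (k : ℝ) ≤ α * n := hn ▸ Nat.floor_le (by positivity)
    have hhi : α * n < k + 1 := hn ▸ Nat.lt_floor_add_one _
    simp only [Finset.coe_Ico, mem_Ico]
    constructor
    · exact Nat.ceil_le.2 ((div_le_iff₀' hα).2 hlo)
    · have hn_lt : (n : ℝ) < k / α + α⁻¹ := by
        rw [div_add' _ _ _ hα.ne', lt_div_iff₀' hα]; linarith [mul_inv_cancel₀ hα.ne']
      have : (n : ℝ) < c + (⌊α⁻¹⌋₊ + 1) := by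
        linarith [Nat.le_ceil (k / α), Nat.lt_floor_add_one α⁻¹]
      exact_mod_cast this
  calc _ ≤ _ := Set.encard_le_encard hsub
    _ = _ := by rw [Set.encard_coe_eq_coe_finsetCard, Nat.card_Ico, Nat.add_sub_cancel_left]

theorem Real.hasSum_pow_div_factorial_add_succ (x : ℝ) :
    HasSum (fun m : ℕ => x ^ m / m ! + x ^ (m + 1) / (m + 1)!) (2 * exp x - 1) := by
  have h := NormedSpace.expSeries_div_hasSum_exp x
  rw [← exp_eq_exp_ℝ] at h
  have hsucc := (hasSum_nat_add_iff' 1).2 h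
  simp only [Finset.range_one, Finset.sum_singleton, pow_zero, Nat.factorial_zero,
    Nat.cast_one, div_one] at hsucc
  rw [show 2 * exp x - 1 = exp x + (exp x - 1) by ring]
  exact h.add hsucc

theorem mittagLeffler_rpow_le {α x : ℝ} (hα : 0 < α) (hx : 0 ≤ x) :
    mittagLeffler α (x ^ α) ≤ 4 * (⌊α⁻¹⌋₊ + 1 : ℕ) * exp x := by
  set g : ℕ → ℝ := fun m => 2 * (x ^ m / m ! + x ^ (m + 1) / (m + 1)!)
  have hg : 0 ≤ g := fun m => by positivity
  have hgs : HasSum g (2 * (2 * exp x - 1)) := (hasSum_pow_div_factorial_add_succ x).mul_left 2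
  have hterm (n : ℕ) : (x ^ α) ^ n / Gamma (α * n + 1) ≤ g ⌊α * n⌋₊ := by
    rw [← rpow_natCast, ← rpow_mul hx]
    exact rpow_div_Gamma_le hx (by positivity)
  have hterm_nonneg (n : ℕ) : 0 ≤ (x ^ α) ^ n / Gamma (α * n + 1) := by
    have := Gamma_pos_of_pos (by positivity : 0 < α * n + 1)
    positivity
  have hmaj : Summable fun n : ℕ => g ⌊α * n⌋₊ :=
    summable_comp_of_encard_fiber_le (g := g) (encard_preimage_floor_mul_le hα) hg hgs.summable
  calc mittagLeffler α (x ^ α) ≤ ∑' n : ℕ, g ⌊α * n⌋₊ :=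
        (hmaj.of_nonneg_of_le hterm_nonneg hterm).tsum_le_tsum hterm hmaj
    _ ≤ (⌊α⁻¹⌋₊ + 1 : ℕ) * (2 * (2 * exp x - 1)) := by
        rw [← hgs.tsum_eq]
        exact tsum_comp_le_of_encard_fiber_le (g := g) (encard_preimage_floor_mul_le hα) hg
          hgs.summable
    _ ≤ 4 * (⌊α⁻¹⌋₊ + 1 : ℕ) * exp x := by
        have : (0 : ℝ) ≤ (⌊α⁻¹⌋₊ + 1 : ℕ) := Nat.cast_nonneg _
        nlinarith

/-- For `0 < α < 2` and `ω ≥ 0` there is `C > 0` with `E_α(ω tᵅ) ≤ C e^{ω^{1/α} t}`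
for all `t ≥ 0`. -/
theorem mittagLeffler_exp_bound (α ω : ℝ) (hα : α ∈ Set.Ioo (0:ℝ) 2) (hω : 0 ≤ ω) :
    ∃ C : ℝ, 0 < C ∧ ∀ t : ℝ, 0 ≤ t →
      mittagLeffler α (ω * t ^ α) ≤ C * Real.exp (ω ^ (1/α) * t) := by
  obtain ⟨hα0, -⟩ := hα
  refine ⟨4 * (⌊α⁻¹⌋₊ + 1 : ℕ), by positivity, fun t ht => ?_⟩
  have hx : ω * t ^ α = (ω ^ (1 / α) * t) ^ α := by
    rw [mul_rpow (rpow_nonneg hω _) ht, ← rpow_mul hω, one_div_mul_cancel hα0.ne', rpow_one]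
  rw [hx]
  exact mittagLeffler_rpow_le hα0 (by positivity)
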